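/- Suppose G contains no colliders and let ν ∈ P(X). Then for every 1-Lipschitz function f : X → ℝ, ∫ f dν^{bA} = ∫ f^ν dν^M, where f^ν : M → ℝ is the cell-average of f with respect to the product of the marginals of ν: f^ν(x) = (1/(⊗_{k=1}^K ν_k)(c(x))) ∫_{c(x)} f d(⊗_{k=1}^K ν_k), with the convention f^ν(x) = 0 when (⊗_{k=1}^K ν_k)(c(x)) = 0. -/

import Mathlib

open MeasureTheory Finset
open scoped ENNReal NNReal

noncomputable section

abbrev I01 : Type := unitInterval

def half : I01 := ⟨1 / 2, by norm_num⟩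

/-- Index of the dyadic cell of side length `2^{-η}` containing `t ∈ [0,1]`. -/
def cIdx (η : ℕ) (t : I01) : ℕ := min ⌊(t : ℝ) * 2 ^ η⌋₊ (2 ^ η - 1)

lemma cIdx_le_real (η : ℕ) (t : I01) : (cIdx η t : ℝ) ≤ 2 ^ η - 1 := by
  have h : cIdx η t ≤ 2 ^ η - 1 := min_le_right _ _
  have h1 : (1 : ℕ) ≤ 2 ^ η := Nat.one_le_two_pow
  calc (cIdx η t : ℝ) ≤ ((2 ^ η - 1 : ℕ) : ℝ) := by exact_mod_cast h
    _ = 2 ^ η - 1 := by rw [Nat.cast_sub h1]; push_cast; ring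

/-- Midpoint of the dyadic cell of side length `2^{-η}` containing `t`. -/
def cMid (η : ℕ) (t : I01) : I01 :=
  ⟨((cIdx η t : ℝ) + 1 / 2) / 2 ^ η, by
    constructor
    · positivity
    · rw [div_le_one (by positivity)]
      have := cIdx_le_real η t
      linarith⟩

/-- Order-1 Wasserstein distance (w.r.t. the given metric, infimum over couplings). -/
def Wass {α : Type*} [MeasurableSpace α] [PseudoMetricSpace α] (μ ν : Measure α) : ℝ :=
  sInf {r | ∃ π : Measure (α × α), π.map Prod.fst = μ ∧ π.map Prod.snd = ν ∧
    r = ∫ p, dist p.1 p.2 ∂π}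

/-- Total variation distance, `sup { ∫ f dμ - ∫ f dν : f measurable, |f| ≤ 1/2 }`. -/
def TVDist {α : Type*} [MeasurableSpace α] (μ ν : Measure α) : ℝ :=
  sSup {r | ∃ f : α → ℝ, Measurable f ∧ (∀ x, |f x| ≤ 1 / 2) ∧
    r = (∫ x, f x ∂μ) - ∫ x, f x ∂ν}

/-- Total variation norm of a signed measure, `sup { ∫ f dν : |f| ≤ 1/2 } = |ν|(univ)/2`. -/
def tvNorm {α : Type*} [MeasurableSpace α] (s : SignedMeasure α) : ℝ :=
  (s.totalVariation Set.univ).toReal / 2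

/-- `m` conditioned on `s` (normalized restriction), Dirac at `x₀` if `m s = 0`. -/
def condOn {α : Type*} [MeasurableSpace α] (m : Measure α) (s : Set α) (x₀ : α) : Measure α :=
  if m s = 0 then Measure.dirac x₀ else (m s)⁻¹ • m.restrict s

/-- Empirical measure of the sample `ω`. -/
def empOf {α : Type*} [MeasurableSpace α] (n : ℕ) (ω : Fin n → α) : Measure α :=
  (n : ℝ≥0∞)⁻¹ • ∑ i : Fin n, Measure.dirac (ω i)

/-- Law of `n` i.i.d. samples from `μ`. -/
def iid {α : Type*} [MeasurableSpace α] (n : ℕ) (μ : Measure α) : Measure (Fin n → α) :=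
  Measure.pi fun _ => μ

section Graphical

variable {K : ℕ}

abbrev Coord (d : Fin K → ℕ) (k : Fin K) : Type := Fin (d k) → I01
abbrev Pt (d : Fin K → ℕ) : Type := ∀ k : Fin K, Coord d k
abbrev PtOn (d : Fin K → ℕ) (I : Finset (Fin K)) : Type := ∀ j : I, Coord d j.1

def projOn (d : Fin K → ℕ) (I : Finset (Fin K)) (x : Pt d) : PtOn d I := fun j => x j.1

def restrOn (d : Fin K → ℕ) {I J : Finset (Fin K)} (h : I ⊆ J) (y : PtOn d J) : PtOn d I :=
  fun j => y ⟨j.1, h j.2⟩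

def basePt (d : Fin K → ℕ) : Pt d := fun _ _ => half

/-- The cell of the partition of `X_I` into cubes of side length `2^{-η}` containing `x`. -/
def cellOn (d : Fin K → ℕ) (η : ℕ) (I : Finset (Fin K)) (x : PtOn d I) : Set (PtOn d I) :=
  {y | ∀ j i, cIdx η (y j i) = cIdx η (x j i)}

/-- The cylinder over the cell of `A_I` containing the coordinates `x_I` of `x`. -/
def cylOf (d : Fin K → ℕ) (η : ℕ) (I : Finset (Fin K)) (x : Pt d) : Set (Pt d) :=
  {y | ∀ j ∈ I, ∀ i, cIdx η (y j i) = cIdx η (x j i)}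

def midPtOn (d : Fin K → ℕ) (η : ℕ) (I : Finset (Fin K)) (x : PtOn d I) : PtOn d I :=
  fun j i => cMid η (x j i)

def midPt (d : Fin K → ℕ) (η : ℕ) (x : Pt d) : Pt d := fun k i => cMid η (x k i)

/-- The DAG (given by its parent map) is topologically sorted. -/
def SortedGraph (pa : Fin K → Finset (Fin K)) : Prop := ∀ k, ∀ j ∈ pa k, j < k

/-- A set of nodes is fully connected (any two of its nodes are joined by an edge). -/
def FullConn (pa : Fin K → Finset (Fin K)) (I : Finset (Fin K)) : Prop :=
  ∀ i ∈ I, ∀ j ∈ I, i < j → i ∈ pa j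

/-- The graph has no colliders: every parent set is fully connected. -/
def NoColliders (pa : Fin K → Finset (Fin K)) : Prop := ∀ k, FullConn pa (pa k)

def below (k : Fin K) : Finset (Fin K) := Finset.univ.filter fun j => j < k
def uptoI (k : Fin K) : Finset (Fin K) := Finset.univ.filter fun j => j ≤ k
def preOf (pa : Fin K → Finset (Fin K)) (k : Fin K) : Finset (Fin K) := uptoI k \ pa k

def dpa (d : Fin K → ℕ) (pa : Fin K → Finset (Fin K)) (k : Fin K) : ℕ := ∑ j ∈ pa k, d j

def dloc (d : Fin K → ℕ) (pa : Fin K → Finset (Fin K)) : ℕ :=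
  Finset.univ.sup fun k : Fin K => max 2 (d k) + dpa d pa k

def dmax (d : Fin K → ℕ) : ℕ := Finset.univ.sup fun k : Fin K => max 2 (d k)

/-- `κ` is a regular conditional distribution of the coordinates in `J` given those in `I`,
under `μ`. -/
def IsCondD (d : Fin K → ℕ) (μ : Measure (Pt d)) (I J : Finset (Fin K))
    (κ : PtOn d I → Measure (PtOn d J)) : Prop :=
  Measurable κ ∧ (∀ y, IsProbabilityMeasure (κ y)) ∧
    ∀ (A : Set (PtOn d I)) (B : Set (PtOn d J)), MeasurableSet A → MeasurableSet B →
      μ {x | projOn d I x ∈ A ∧ projOn d J x ∈ B} = ∫⁻ y in A, κ y B ∂(μ.map (projOn d I))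

/-- `μ ∈ P_G`: for each node, some conditional distribution of `x_k` given all earlier
coordinates factors through the parent coordinates only. -/
def MemPG (d : Fin K → ℕ) (pa : Fin K → Finset (Fin K)) (μ : Measure (Pt d)) : Prop :=
  ∀ k : Fin K, ∃ κ : PtOn d (pa k) → Measure (PtOn d ({k} : Finset (Fin K))),
    IsCondD d μ (below k ∪ pa k) {k}
      fun y => κ (restrOn d (fun _ hj => Finset.mem_union_right _ hj) y)

/-- Wasserstein-Lipschitz kernel assumption with constant `L`. -/
def WLip (d : Fin K → ℕ) (pa : Fin K → Finset (Fin K)) (L : ℝ) (μ : Measure (Pt d)) : Prop :=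
  ∀ k : Fin K, 1 ≤ k.1 →
    ∃ κ : PtOn d (pa k) → Measure (PtOn d ({k} : Finset (Fin K))),
      IsCondD d μ (pa k) {k} κ ∧
        ∀ x x' : PtOn d (pa k), Wass (κ x) (κ x') ≤ L * dist x x'

/-- Total-variation-Lipschitz kernel assumption with constant `L`. -/
def TVLip (d : Fin K → ℕ) (pa : Fin K → Finset (Fin K)) (L : ℝ) (μ : Measure (Pt d)) : Prop :=
  ∀ k : Fin K, 1 ≤ k.1 →
    (∃ κ : PtOn d (pa k) → Measure (PtOn d ({k} : Finset (Fin K))),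
      IsCondD d μ (pa k) {k} κ ∧
        ∀ x x', TVDist (κ x) (κ x') ≤ L * dist x x') ∧
    (∃ κ : PtOn d (pa k) → Measure (PtOn d (preOf pa k)),
      IsCondD d μ (pa k) (preOf pa k) κ ∧
        ∀ x x', TVDist (κ x) (κ x') ≤ L * dist x x') ∧
    (∃ κ : PtOn d ({k} : Finset (Fin K)) → Measure (PtOn d (pa k)),
      IsCondD d μ {k} (pa k) κ ∧
        ∀ x x', TVDist (κ x) (κ x') ≤ L * dist x x')

/-- Iterated construction of the graph product measure `∏_k κ_k(dx_k | x_pa(k))`. -/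
def chainM (d : Fin K → ℕ) (pa : Fin K → Finset (Fin K))
    (κ : ∀ k : Fin K, PtOn d (pa k) → Measure (PtOn d ({k} : Finset (Fin K)))) :
    ℕ → Measure (Pt d)
  | 0 => Measure.dirac (basePt d)
  | n + 1 =>
      if h : n < K then
        (chainM d pa κ n).bind fun x =>
          (κ ⟨n, h⟩ (projOn d (pa ⟨n, h⟩) x)).map fun y =>
            Function.update x ⟨n, h⟩ (y ⟨⟨n, h⟩, Finset.mem_singleton_self _⟩)
      else chainM d pa κ n

def graphProd (d : Fin K → ℕ) (pa : Fin K → Finset (Fin K))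
    (κ : ∀ k : Fin K, PtOn d (pa k) → Measure (PtOn d ({k} : Finset (Fin K)))) :
    Measure (Pt d) := chainM d pa κ K

/-- Completion of `x ∈ X_pa(k)` to a point of `X` (cell midpoints on `pa k`, `1/2` elsewhere). -/
def extendPt (d : Fin K → ℕ) (pa : Fin K → Finset (Fin K)) (η : ℕ) (k : Fin K)
    (x : PtOn d (pa k)) : Pt d :=
  fun j => if h : j ∈ pa k then (fun i => cMid η (x ⟨j, h⟩ i)) else fun _ => half

/-- The measure `ν^A` built from a choice `κ` of conditional kernels of `ν`. -/
def opA (d : Fin K → ℕ) (pa : Fin K → Finset (Fin K)) (η : ℕ) (ν : Measure (Pt d))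
    (κ : ∀ k : Fin K, PtOn d (pa k) → Measure (PtOn d ({k} : Finset (Fin K)))) :
    Measure (Pt d) :=
  graphProd d pa fun k x =>
    (condOn (ν.map (projOn d (pa k))) (cellOn d η (pa k) x) (midPtOn d η (pa k) x)).bind (κ k)

/-- The canonical (kernel-choice free) version of `ν^A`. -/
def opACanon (d : Fin K → ℕ) (pa : Fin K → Finset (Fin K)) (η : ℕ) (ν : Measure (Pt d)) :
    Measure (Pt d) :=
  graphProd d pa fun k x =>
    (condOn ν (projOn d (pa k) ⁻¹' cellOn d η (pa k) x) (extendPt d pa η k x)).map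
      (projOn d ({k} : Finset (Fin K)))

/-- The kernel `μ^{bA}(dx_k | x_pa(k)) = Σ_{c_k} μ(c_k | c_pa(k)(x_pa(k))) μ_{k|c_k}(dx_k)`. -/
def kerBA (d : Fin K → ℕ) (pa : Fin K → Finset (Fin K)) (η : ℕ) (μ : Measure (Pt d))
    (k : Fin K) (x : PtOn d (pa k)) : Measure (PtOn d ({k} : Finset (Fin K))) :=
  (((condOn μ (projOn d (pa k) ⁻¹' cellOn d η (pa k) x) (extendPt d pa η k x)).map
      (projOn d ({k} : Finset (Fin K)))).bind) fun z =>
    condOn (μ.map (projOn d ({k} : Finset (Fin K)))) (cellOn d η {k} z) (midPtOn d η {k} z)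

/-- The measure `μ^{bA}`. -/
def opBA (d : Fin K → ℕ) (pa : Fin K → Finset (Fin K)) (η : ℕ) (μ : Measure (Pt d)) :
    Measure (Pt d) := graphProd d pa (kerBA d pa η μ)

/-- The midpoint projection `μ^M` of `μ^{bA}`. -/
def opM (d : Fin K → ℕ) (pa : Fin K → Finset (Fin K)) (η : ℕ) (μ : Measure (Pt d)) :
    Measure (Pt d) := (opBA d pa η μ).map (midPt d η)

/-- The kernel of `μ^M` built from the conditional kernel `κ` of `μ`:
cell-average of `κ`, pushed to cell midpoints. -/
def kerM (d : Fin K → ℕ) (pa : Fin K → Finset (Fin K)) (η : ℕ) (μ : Measure (Pt d)) (k : Fin K)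
    (κ : PtOn d (pa k) → Measure (PtOn d ({k} : Finset (Fin K)))) (y : PtOn d (pa k)) :
    Measure (PtOn d ({k} : Finset (Fin K))) :=
  ((condOn (μ.map (projOn d (pa k))) (cellOn d η (pa k) y) (midPtOn d η (pa k) y)).bind κ).map
    (midPtOn d η ({k} : Finset (Fin K)))

/-- `m(dx_k | c_pa(k)(x))`: `m` conditioned on the parent cell of `x`, projected to node `k`. -/
def cellCondProj (d : Fin K → ℕ) (pa : Fin K → Finset (Fin K)) (η : ℕ) (m : Measure (Pt d))
    (k : Fin K) (x : Pt d) : Measure (PtOn d ({k} : Finset (Fin K))) :=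
  (condOn m (projOn d (pa k) ⁻¹' cellOn d η (pa k) (projOn d (pa k) x)) (midPt d η x)).map
    (projOn d ({k} : Finset (Fin K)))

/-- Minimax risk `V_Q(n)` for estimating a measure in `Q` from `n` i.i.d. samples,
in Wasserstein distance. -/
def minimax (d : Fin K → ℕ) (Q : Set (Measure (Pt d))) (n : ℕ) : ℝ :=
  ⨅ E : {E : (Fin n → Pt d) → Measure (Pt d) // Measurable E},
    ⨆ μ : Q, ∫ ω, Wass (μ : Measure (Pt d)) (E.1 ω) ∂(iid n (μ : Measure (Pt d)))

/-- Number of directed paths of length `ℓ` starting at `k` (following edge directions). -/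
def pathCount (pa : Fin K → Finset (Fin K)) : ℕ → Fin K → ℕ
  | 0, _ => 1
  | ℓ + 1, k => ∑ j ∈ Finset.univ.filter (fun j => k ∈ pa j), pathCount pa ℓ j

/-- The constant `M_{L,k} = 1 + Σ_{ℓ=1}^K a_{k,ℓ} L^ℓ`. -/
def MConst (pa : Fin K → Finset (Fin K)) (L : ℝ) (k : Fin K) : ℝ :=
  1 + ∑ ℓ ∈ Finset.Icc 1 K, (pathCount pa ℓ k : ℝ) * L ^ ℓ

/-- Lebesgue measure on `[0,1]^d = Π_k Π_i [0,1]`. -/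
def lebPt (d : Fin K → ℕ) : Measure (Pt d) :=
  Measure.pi fun k => Measure.pi fun _ : Fin (d k) => (volume : Measure ℝ).comap Subtype.val

/-- Product of the (one-node) marginals of `ν`. -/
def prodMarg (d : Fin K → ℕ) (ν : Measure (Pt d)) : Measure (Pt d) :=
  Measure.pi fun k => ν.map fun x => x k

/-- Cell average `f^ν` of `f` w.r.t. the product of the marginals of `ν`. -/
def fAvg (d : Fin K → ℕ) (η : ℕ) (ν : Measure (Pt d)) (f : Pt d → ℝ) (x : Pt d) : ℝ :=
  if prodMarg d ν (cylOf d η Finset.univ x) = 0 then 0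
  else (∫ y in cylOf d η Finset.univ x, f y ∂prodMarg d ν) /
    (prodMarg d ν (cylOf d η Finset.univ x)).toReal

/-- Combining points over two disjoint blocks of nodes. -/
def glue (d : Fin K → ℕ) {J J' : Finset (Fin K)} (p : PtOn d J × PtOn d J') :
    PtOn d (J ∪ J') := fun j =>
  if h : j.1 ∈ J then p.1 ⟨j.1, h⟩
  else p.2 ⟨j.1, by
    rcases Finset.mem_union.mp j.2 with h' | h'
    · exact absurd h' h
    · exact h'⟩

/-- `X_J` and `X_J'` are conditionally independent given `X_I` under `μ`. -/
def CondIndepOn (d : Fin K → ℕ) (μ : Measure (Pt d)) (I J J' : Finset (Fin K)) : Prop :=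
  ∃ (κJ : PtOn d I → Measure (PtOn d J)) (κJ' : PtOn d I → Measure (PtOn d J')),
    IsCondD d μ I J κJ ∧ IsCondD d μ I J' κJ' ∧
      IsCondD d μ I (J ∪ J') fun y => ((κJ y).prod (κJ' y)).map (glue d)

/-- The set `P_CI` of probability measures all of whose disjoint coordinate blocks are
conditionally independent given any disjoint nonempty block. -/
def PCI (d : Fin K → ℕ) : Set (Measure (Pt d)) :=
  {μ | IsProbabilityMeasure μ ∧
    ∀ I J J' : Finset (Fin K), I.Nonempty → Disjoint I J → Disjoint I J' → Disjoint J J' →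
      CondIndepOn d μ I J J'}

end Graphical

section TwoBlocks

abbrev Vec (m : ℕ) : Type := Fin m → I01

def cellV (η : ℕ) {m : ℕ} (x : Vec m) : Set (Vec m) :=
  {y | ∀ i, cIdx η (y i) = cIdx η (x i)}

def midV (η : ℕ) {m : ℕ} (x : Vec m) : Vec m := fun i => cMid η (x i)

/-- `ν^A` for two blocks and the graph `1 → 2`. -/
def opA2 {m₁ m₂ : ℕ} (η : ℕ) (ν : Measure (Vec m₁ × Vec m₂)) : Measure (Vec m₁ × Vec m₂) :=
  ν.bind fun p =>
    ((condOn ν (Prod.fst ⁻¹' cellV η p.1) (midV η p.1, midV η p.2)).map Prod.snd).map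
      fun y => (p.1, y)

/-- `μ^{bA}` for two blocks:  `Σ_{c₁,c₂} μ(c₁ × c₂) (μ_{1|c₁} ⊗ μ_{2|c₂})`. -/
def opBA2 {m₁ m₂ : ℕ} (η : ℕ) (μ : Measure (Vec m₁ × Vec m₂)) : Measure (Vec m₁ × Vec m₂) :=
  μ.bind fun p =>
    (condOn (μ.map Prod.fst) (cellV η p.1) (midV η p.1)).prod
      (condOn (μ.map Prod.snd) (cellV η p.2) (midV η p.2))

/-- The kernel `μ^{bA}(dx₂ | x₁) = Σ_{c₂} μ(c₂ | c₁(x₁)) μ_{2|c₂}(dx₂)`. -/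
def kerBA2 {m₁ m₂ : ℕ} (η : ℕ) (μ : Measure (Vec m₁ × Vec m₂)) (x₁ : Vec m₁) :
    Measure (Vec m₂) :=
  (((condOn μ (Prod.fst ⁻¹' cellV η x₁) (midV η x₁, fun _ => half)).map Prod.snd).bind) fun z =>
    condOn (μ.map Prod.snd) (cellV η z) (midV η z)

/-- `κ` is a conditional distribution of the second block given the first, under `μ`. -/
def IsCD2 {m₁ m₂ : ℕ} (μ : Measure (Vec m₁ × Vec m₂)) (κ : Vec m₁ → Measure (Vec m₂)) : Prop :=
  Measurable κ ∧ (∀ x, IsProbabilityMeasure (κ x)) ∧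
    ∀ (A : Set (Vec m₁)) (B : Set (Vec m₂)), MeasurableSet A → MeasurableSet B →
      μ (A ×ˢ B) = ∫⁻ x in A, κ x B ∂(μ.map Prod.fst)

end TwoBlocks

end

/-!
For a cell `c = (c_1, …, c_K)` of `A` put `W(c) = ∏_k ν(c_k | c_pa(k))`. Unfolding the sequential
construction of `ν^{bA}` along the topological order turns it into the finite mixture
`ν^{bA} = ∑_c W(c) • ⊗_k ν_{k|c_k}`: the kernel of node `k` depends on the parents only through
their cells, and parents precede `k`, so drawing `x_k` just refines the mixture by the cell of
`x_k`. Consequently `ν^M = ∑_c W(c) • δ_{m(c)}`, `m(c)` the midpoint of `c`.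

If `W(c) ≠ 0`, every `ν_k(c_k)` is positive: without colliders, the positivity of the parent
cells propagates along the order. Then `⊗_k ν_{k|c_k}` is the product of the marginals of `ν`
conditioned on `c`, whose integral of `f` is `f^ν(m(c))`; cells with `W(c) = 0` contribute to
neither side.
-/

open ProbabilityTheory

noncomputable section

namespace MeasureTheory.Measure

variable {α β γ : Type*} [MeasurableSpace α] [MeasurableSpace β] [MeasurableSpace γ]

lemma map_bind (m : Measure α) {g : α → Measure β} (hg : Measurable g) {h : β → γ}
    (hh : Measurable h) : (m.bind g).map h = m.bind fun a => (g a).map h := by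
  ext s hs
  rw [map_apply hh hs, bind_apply (hh hs) hg.aemeasurable,
    bind_apply hs (f := fun a => (g a).map h) ((measurable_map h hh).comp hg).aemeasurable]
  exact lintegral_congr fun a => (map_apply hh hs).symm

lemma bind_comp_eq_sum {ι : Type*} [Fintype ι] [MeasurableSpace ι] [MeasurableSingletonClass ι]
    (m : Measure α) {h : α → ι} (hh : Measurable h) (g : ι → Measure β) :
    m.bind (fun a => g (h a)) = ∑ i, m (h ⁻¹' {i}) • g i := by
  ext s hs
  rw [bind_apply hs (f := fun a => g (h a)) (Measurable.of_discrete.comp hh).aemeasurable,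
    finsetSum_apply,
    ← lintegral_map (f := fun i => g i s) Measurable.of_discrete hh, lintegral_fintype]
  simp only [map_apply hh (measurableSet_singleton _), smul_apply, smul_eq_mul, mul_comm]

lemma finsetSum_smul_bind {ι : Type*} [Fintype ι] (w : ι → ℝ≥0∞) (μ : ι → Measure α)
    {f : α → Measure β} (hf : Measurable f) :
    (∑ i, w i • μ i).bind f = ∑ i, w i • (μ i).bind f := by
  ext s hs
  simp only [bind_apply hs hf.aemeasurable, lintegral_finsetSum_measure, finsetSum_apply,
    lintegral_smul_measure, smul_apply, smul_eq_mul]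

lemma bind_finsetSum_smul {ι : Type*} [Fintype ι] (m : Measure α) (w : ι → ℝ≥0∞)
    {g : ι → α → Measure β} (hg : ∀ i, Measurable (g i)) :
    m.bind (fun a => ∑ i, w i • g i a) = ∑ i, w i • m.bind (g i) := by
  have hgs : ∀ i {s : Set β}, MeasurableSet s → Measurable fun a => g i a s :=
    fun i _ hs => (measurable_coe hs).comp (hg i)
  have hsum : Measurable fun a => ∑ i, w i • g i a :=
    measurable_of_measurable_coe _ fun s hs => by
      simpa only [finsetSum_apply, smul_apply, smul_eq_mul] using
        Finset.measurable_sum _ fun i _ => (hgs i hs).const_mul (w i)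
  ext s hs
  simp only [bind_apply hs hsum.aemeasurable, finsetSum_apply, smul_apply, smul_eq_mul,
    bind_apply hs (hg _).aemeasurable]
  rw [lintegral_finsetSum _ fun i _ => (hgs i hs).const_mul (w i)]
  exact Finset.sum_congr rfl fun i _ => lintegral_const_mul _ (hgs i hs)

lemma map_finsetSum_smul {ι : Type*} [Fintype ι] (w : ι → ℝ≥0∞) (μ : ι → Measure α)
    {g : α → β} (hg : Measurable g) :
    (∑ i, w i • μ i).map g = ∑ i, w i • (μ i).map g := by
  rw [map_finset_sum' hg.aemeasurable]
  simp only [Measure.map_smul]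

variable {ι : Type*} {π : ι → Type*} [∀ i, MeasurableSpace (π i)]

lemma measurable_map_update [DecidableEq ι] (i : ι) (σ : Measure (π i)) [SFinite σ] :
    Measurable fun x : ∀ j, π j => σ.map (Function.update x i) := by
  refine measurable_of_measurable_coe _ fun s hs => ?_
  have hup : Measurable fun p : (∀ j, π j) × π i => Function.update p.1 i p.2 :=
    measurable_update'
  simp_rw [map_apply (measurable_update _) hs]
  exact measurable_measure_prodMk_left (hup hs)

variable [Fintype ι]

lemma pi_dirac (x : ∀ i, π i) : Measure.pi (fun i => dirac (x i)) = dirac x := by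
  refine Measure.pi_eq fun B hB => ?_
  by_cases hx : x ∈ Set.univ.pi B
  · rw [dirac_apply_of_mem hx]
    exact (Finset.prod_eq_one fun i _ => dirac_apply_of_mem (hx i trivial)).symm
  · obtain ⟨i, -, hi⟩ := by simpa only [Set.mem_pi, not_forall] using hx
    rw [dirac_apply' _ (MeasurableSet.univ_pi hB), Set.indicator_of_notMem hx,
      Finset.prod_eq_zero (Finset.mem_univ i)]
    rw [dirac_apply' _ (hB i), Set.indicator_of_notMem hi]

lemma pi_cond (μ : ∀ i, Measure (π i)) [∀ i, IsFiniteMeasure (μ i)] {s : ∀ i, Set (π i)}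
    (hs : ∀ i, MeasurableSet (s i)) :
    Measure.pi (fun i => (μ i)[|s i]) = (Measure.pi μ)[|Set.univ.pi s] := by
  refine Measure.pi_eq fun B hB => ?_
  rw [cond_apply (MeasurableSet.univ_pi hs), ← Set.pi_inter_distrib, pi_pi, pi_pi,
    ENNReal.prod_inv_distrib fun i _ j _ _ => Or.inr (measure_ne_top _ _),
    ← Finset.prod_mul_distrib]
  exact Finset.prod_congr rfl fun i _ => (cond_apply (hs i) _ _).symm

lemma pi_bind_map_update [DecidableEq ι] (μ : ∀ i, Measure (π i))
    [∀ i, IsProbabilityMeasure (μ i)] (i : ι) (σ : Measure (π i)) [IsProbabilityMeasure σ] :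
    (Measure.pi μ).bind (fun x => σ.map (Function.update x i)) =
      Measure.pi (Function.update μ i σ) := by
  have : ∀ j, IsProbabilityMeasure (Function.update μ i σ j) := fun j => by
    rcases eq_or_ne j i with rfl | hj
    · rw [Function.update_self]; infer_instance
    · rw [Function.update_of_ne hj]; infer_instance
  refine (Measure.pi_eq fun B hB => ?_).symm
  set B' : ∀ j, Set (π j) := Function.update B i Set.univ
  have hB' : MeasurableSet (Set.univ.pi B') := MeasurableSet.univ_pi fun j => by
    rcases eq_or_ne j i with rfl | hj
    · simp [B']
    · simpa [B', Function.update_of_ne hj] using hB j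
  have hfiber : ∀ x, σ.map (Function.update x i) (Set.univ.pi B) =
      (Set.univ.pi B').indicator (fun _ => σ (B i)) x := by
    intro x
    rw [map_apply (measurable_update x) (MeasurableSet.univ_pi hB)]
    by_cases hx : x ∈ Set.univ.pi B'
    · rw [Set.indicator_of_mem hx, Set.update_preimage_univ_pi fun j hj => by
        simpa [B', Function.update_of_ne hj] using hx j trivial]
    · rw [Set.indicator_of_notMem hx]
      refine measure_mono_null (fun v hv => hx fun j _ => ?_) measure_empty
      rcases eq_or_ne j i with rfl | hj
      · simp [B']
      · simpa [B', Function.update_of_ne hj] using hv j trivial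
  rw [bind_apply (MeasurableSet.univ_pi hB) (measurable_map_update i σ).aemeasurable,
    lintegral_congr hfiber, lintegral_indicator_const hB', pi_pi,
    Fintype.prod_eq_mul_prod_compl i, Fintype.prod_eq_mul_prod_compl i]
  simp only [B', Function.update_self, measure_univ, one_mul]
  refine congrArg _ (Finset.prod_congr rfl fun j hj => ?_)
  have hj : j ≠ i := by simpa using hj
  simp only [Function.update_of_ne hj]

end MeasureTheory.Measure

lemma Fintype.sum_sum_ite_update {ι : Type*} [Fintype ι] [DecidableEq ι] {β : ι → Type*}
    [∀ i, Fintype (β i)] [∀ i, DecidableEq (β i)] {M : Type*} [AddCommMonoid M] (i : ι)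
    (a : β i) (G : (∀ j, β j) → M) :
    ∑ c : ∀ j, β j, ∑ b : β i, (if c i = a then G (Function.update c i b) else 0) = ∑ c, G c := by
  let e : Equiv.Perm ((∀ j, β j) × β i) :=
    Function.Involutive.toPerm (fun p => (Function.update p.1 i p.2, p.1 i)) fun p => by simp
  rw [← Fintype.sum_prod_type',
    Fintype.sum_equiv e (fun p => if p.1 i = a then G (Function.update p.1 i p.2) else 0)
      (fun q => if q.2 = a then G q.1 else 0) fun _ => rfl,
    Fintype.sum_prod_type]
  simp

variable {α : Type*} [MeasurableSpace α]

lemma condOn_of_ne_zero {m : Measure α} {s : Set α} (x₀ : α) (h : m s ≠ 0) :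
    condOn m s x₀ = m[|s] := if_neg h

instance (m : Measure α) [IsFiniteMeasure m] (s : Set α) (x₀ : α) :
    IsProbabilityMeasure (condOn m s x₀) := by
  unfold condOn
  split_ifs with h
  · infer_instance
  · exact cond_isProbabilityMeasure h

lemma condOn_apply_self (m : Measure α) [IsFiniteMeasure m] {s : Set α} {x₀ : α}
    (hx : x₀ ∈ s) : condOn m s x₀ s = 1 := by
  unfold condOn
  split_ifs with h
  · exact Measure.dirac_apply_of_mem hx
  · exact cond_apply_self h (measure_ne_top m s)

lemma map_condOn {β : Type*} [MeasurableSpace β] (e : α ≃ᵐ β) (m : Measure α) {s : Set β}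
    (hs : MeasurableSet s) (x₀ : α) :
    (condOn m (e ⁻¹' s) x₀).map e = condOn (m.map e) s (e x₀) := by
  unfold condOn
  rw [Measure.map_apply e.measurable hs]
  split_ifs
  · exact Measure.map_dirac' e.measurable x₀
  · rw [Measure.map_smul, Measure.restrict_map e.measurable hs]

lemma integral_cond (m : Measure α) (s : Set α) (f : α → ℝ) :
    ∫ x, f x ∂m[|s] = (∫ x in s, f x ∂m) / (m s).toReal := by
  unfold ProbabilityTheory.cond
  rw [integral_smul_measure, ENNReal.toReal_inv, smul_eq_mul, div_eq_inv_mul]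

lemma integral_finsetSum_smul_measure {ι : Type*} [Fintype ι] {w : ι → ℝ≥0∞}
    (hw : ∀ i, w i ≠ ∞) {μ : ι → Measure α} {f : α → ℝ} (hf : ∀ i, Integrable f (μ i)) :
    ∫ x, f x ∂(∑ i, w i • μ i) = ∑ i, (w i).toReal * ∫ x, f x ∂μ i := by
  rw [integral_finsetSum_measure fun i _ => (hf i).smul_measure (hw i)]
  simp only [integral_smul_measure, smul_eq_mul]

lemma min_sub_one_lt_two_pow (η m : ℕ) : min m (2 ^ η - 1) < 2 ^ η :=
  lt_of_le_of_lt (min_le_right _ _) (Nat.sub_lt Nat.one_le_two_pow Nat.one_pos)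

def cellIdx (η : ℕ) (t : I01) : Fin (2 ^ η) := ⟨cIdx η t, min_sub_one_lt_two_pow η _⟩

def cellMidOf (η : ℕ) (n : Fin (2 ^ η)) : I01 :=
  ⟨((n : ℝ) + 1 / 2) / 2 ^ η, by
    have hn : (n : ℝ) + 1 ≤ 2 ^ η := by exact_mod_cast n.isLt
    constructor
    · positivity
    · rw [div_le_one (by positivity)]
      linarith⟩

lemma cellIdx_cellMidOf (η : ℕ) (n : Fin (2 ^ η)) : cellIdx η (cellMidOf η n) = n := by
  have hcoe : (cellMidOf η n : ℝ) * 2 ^ η = n + 1 / 2 := by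
    simp only [cellMidOf]
    field_simp
  have hfloor : ⌊(cellMidOf η n : ℝ) * 2 ^ η⌋₊ = n := by
    rw [hcoe, Nat.floor_eq_iff (by positivity)]
    constructor <;> linarith
  ext
  simp only [cellIdx, cIdx, hfloor]
  exact min_eq_left (Nat.le_sub_one_of_lt n.isLt)

lemma measurable_cellIdx (η : ℕ) : Measurable (cellIdx η) := by
  have hfloor : Measurable fun t : I01 => ⌊(t : ℝ) * 2 ^ η⌋₊ :=
    Nat.measurable_floor.comp (measurable_subtype_coe.mul measurable_const)
  exact (Measurable.of_discrete
    (f := fun m : ℕ => (⟨min m (2 ^ η - 1), min_sub_one_lt_two_pow η m⟩ : Fin (2 ^ η)))).comp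
    hfloor

namespace CellDecomposition

variable {K : ℕ}

abbrev NodeCell (d : Fin K → ℕ) (η : ℕ) (k : Fin K) : Type := Fin (d k) → Fin (2 ^ η)

abbrev Cell (d : Fin K → ℕ) (η : ℕ) : Type := ∀ k, NodeCell d η k

variable (d : Fin K → ℕ) (pa : Fin K → Finset (Fin K)) (η : ℕ)

def nodeCellOf {k : Fin K} (v : Coord d k) : NodeCell d η k := fun i => cellIdx η (v i)

def cellOf (x : Pt d) : Cell d η := fun k => nodeCellOf d η (x k)

def nodeMid {k : Fin K} (ck : NodeCell d η k) : Coord d k := fun i => cellMidOf η (ck i)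

def cellMid (c : Cell d η) : Pt d := fun k => nodeMid d η (c k)

def nodeCell {k : Fin K} (ck : NodeCell d η k) : Set (Coord d k) := nodeCellOf d η ⁻¹' {ck}

def cell (c : Cell d η) : Set (Pt d) := cellOf d η ⁻¹' {c}

def cyl (S : Finset (Fin K)) (c : Cell d η) : Set (Pt d) :=
  {x | ∀ j ∈ S, nodeCellOf d η (x j) = c j}

def baseCell : Cell d η := cellOf d η (basePt d)

variable {d pa η}

lemma nodeCellOf_nodeMid {k : Fin K} (ck : NodeCell d η k) :
    nodeCellOf d η (nodeMid d η ck) = ck :=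
  funext fun i => cellIdx_cellMidOf η (ck i)

lemma cellOf_cellMid (c : Cell d η) : cellOf d η (cellMid d η c) = c :=
  funext fun k => nodeCellOf_nodeMid (c k)

lemma measurable_nodeCellOf (k : Fin K) : Measurable (nodeCellOf d η (k := k)) :=
  measurable_pi_lambda _ fun i => (measurable_cellIdx η).comp (measurable_pi_apply i)

lemma measurable_cellOf : Measurable (cellOf d η) :=
  measurable_pi_lambda _ fun k => (measurable_nodeCellOf k).comp (measurable_pi_apply k)

lemma measurableSet_nodeCell {k : Fin K} (ck : NodeCell d η k) :
    MeasurableSet (nodeCell d η ck) :=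
  measurable_nodeCellOf k (measurableSet_singleton ck)

lemma measurableSet_cell (c : Cell d η) : MeasurableSet (cell d η c) :=
  measurable_cellOf (measurableSet_singleton c)

lemma measurableSet_cyl (S : Finset (Fin K)) (c : Cell d η) : MeasurableSet (cyl d η S c) := by
  have : cyl d η S c = ⋂ j ∈ S, (fun x : Pt d => x j) ⁻¹' nodeCell d η (c j) := by
    ext x
    simp [cyl, nodeCell]
  rw [this]
  exact .biInter (Set.to_countable _) fun j _ =>
    measurable_pi_apply j (measurableSet_nodeCell (c j))

lemma cell_eq_pi (c : Cell d η) : cell d η c = Set.univ.pi fun k => nodeCell d η (c k) := by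
  ext x
  simp [cell, nodeCell, cellOf, funext_iff]

lemma cyl_empty (c : Cell d η) : cyl d η ∅ c = Set.univ := by
  simp [cyl]

lemma midPt_eq_cellMid_cellOf (x : Pt d) : midPt d η x = cellMid d η (cellOf d η x) := rfl

lemma measurable_midPt : Measurable (midPt d η) := by
  have : midPt d η = fun x => cellMid d η (cellOf d η x) := funext midPt_eq_cellMid_cellOf
  rw [this]
  exact (Measurable.of_discrete (f := cellMid d η)).comp measurable_cellOf

lemma cylOf_univ (x : Pt d) : cylOf d η Finset.univ x = cell d η (cellOf d η x) := by
  ext y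
  simp only [cylOf, Finset.mem_univ, true_implies, Set.mem_ofPred_eq, cell, Set.mem_preimage,
    Set.mem_singleton_iff, cellOf, nodeCellOf, funext_iff, cellIdx, Fin.ext_iff]

lemma measurable_projOn (I : Finset (Fin K)) : Measurable (projOn d I) :=
  measurable_pi_lambda _ fun j => measurable_pi_apply j.1

lemma projOn_preimage_cellOn (k : Fin K) (x : Pt d) :
    projOn d (pa k) ⁻¹' cellOn d η (pa k) (projOn d (pa k) x) = cyl d η (pa k) (cellOf d η x) := by
  ext y
  simp only [cellOn, projOn, Set.mem_preimage, Set.mem_ofPred_eq, cyl, cellOf, nodeCellOf,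
    funext_iff, cellIdx, Fin.ext_iff, Subtype.forall]

variable (d pa η) (ν : Measure (Pt d))

def nodeMarg (k : Fin K) : Measure (Coord d k) := ν.map fun x => x k

def nodeCond {k : Fin K} (ck : NodeCell d η k) : Measure (Coord d k) :=
  condOn (nodeMarg d ν k) (nodeCell d η ck) (nodeMid d η ck)

def parentMid (k : Fin K) (c : Cell d η) : Pt d :=
  fun j => if j ∈ pa k then nodeMid d η (c j) else basePt d j

/-- `transWeight d pa η ν k c ck` is `ν(c_k | c_pa(k))` (a Dirac mass at `parentMid` when the parent
cell is `ν`-null, as in `kerBA`), and `nodeCond d η ν ck` is `ν_{k|c_k}`. -/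
def transWeight (k : Fin K) (c : Cell d η) (ck : NodeCell d η k) : ℝ≥0∞ :=
  condOn ν (cyl d η (pa k) c) (parentMid d pa η k c) ((fun x => x k) ⁻¹' nodeCell d η ck)

def kerCell (k : Fin K) (c : Cell d η) : Measure (Coord d k) :=
  ∑ ck, transWeight d pa η ν k c ck • nodeCond d η ν ck

def singletonEquiv (k : Fin K) : PtOn d ({k} : Finset (Fin K)) ≃ᵐ Coord d k :=
  MeasurableEquiv.piUnique _

variable {d pa η ν}

instance [IsProbabilityMeasure ν] (k : Fin K) : IsProbabilityMeasure (nodeMarg d ν k) :=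
  Measure.isProbabilityMeasure_map (measurable_pi_apply k).aemeasurable

instance [IsProbabilityMeasure ν] {k : Fin K} (ck : NodeCell d η k) :
    IsProbabilityMeasure (nodeCond d η ν ck) := by
  unfold nodeCond
  infer_instance

lemma transWeight_le_one [IsProbabilityMeasure ν] (k : Fin K) (c : Cell d η)
    (ck : NodeCell d η k) : transWeight d pa η ν k c ck ≤ 1 :=
  prob_le_one

instance [IsProbabilityMeasure ν] (k : Fin K) (c : Cell d η) :
    IsFiniteMeasure (kerCell d pa η ν k c) := by
  refine ⟨?_⟩
  rw [kerCell, Measure.finsetSum_apply]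
  refine ENNReal.sum_lt_top.2 fun ck _ => ?_
  rw [Measure.smul_apply, measure_univ, smul_eq_mul, mul_one]
  exact (transWeight_le_one k c ck).trans_lt ENNReal.one_lt_top

lemma transWeight_congr {k : Fin K} {c c' : Cell d η} (hc : ∀ j ∈ pa k, c j = c' j)
    (ck : NodeCell d η k) : transWeight d pa η ν k c ck = transWeight d pa η ν k c' ck := by
  have hcyl : cyl d η (pa k) c = cyl d η (pa k) c' := by
    ext x
    exact forall₂_congr fun j hj => by rw [hc j hj]
  have hmid : parentMid d pa η k c = parentMid d pa η k c' := by
    funext j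
    by_cases hj : j ∈ pa k <;> simp [parentMid, hj, hc]
  rw [transWeight, transWeight, hcyl, hmid]

lemma extendPt_projOn (k : Fin K) (x : Pt d) :
    extendPt d pa η k (projOn d (pa k) x) = parentMid d pa η k (cellOf d η x) := by
  funext j
  by_cases hj : j ∈ pa k <;> simp [extendPt, parentMid, hj] <;> rfl

lemma cellOn_singleton (k : Fin K) (z : PtOn d ({k} : Finset (Fin K))) :
    cellOn d η {k} z =
      singletonEquiv d k ⁻¹' nodeCell d η (nodeCellOf d η (singletonEquiv d k z)) := by
  ext y
  simp only [cellOn, Set.mem_ofPred_eq, Set.mem_preimage, nodeCell, Set.mem_singleton_iff,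
    nodeCellOf, funext_iff, cellIdx, Fin.ext_iff, singletonEquiv, MeasurableEquiv.piUnique_apply]
  exact ⟨fun h => h default, fun h j => Unique.eq_default j ▸ h⟩

lemma midPtOn_singleton (k : Fin K) (z : PtOn d ({k} : Finset (Fin K))) :
    midPtOn d η {k} z =
      (singletonEquiv d k).symm (nodeMid d η (nodeCellOf d η (singletonEquiv d k z))) :=
  (singletonEquiv d k).eq_symm_apply.mpr rfl

lemma map_kerBA_projOn (k : Fin K) (x : Pt d) :
    (kerBA d pa η ν k (projOn d (pa k) x)).map (singletonEquiv d k) =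
      kerCell d pa η ν k (cellOf d η x) := by
  set e := singletonEquiv d k
  set G : NodeCell d η k → Measure (PtOn d ({k} : Finset (Fin K))) := fun ck =>
    condOn (ν.map (projOn d {k})) (e ⁻¹' nodeCell d η ck) (e.symm (nodeMid d η ck))
  have hidx : Measurable fun z => nodeCellOf d η (e z) :=
    (measurable_nodeCellOf k).comp e.measurable
  have hmeasG : Measurable fun z => G (nodeCellOf d η (e z)) :=
    (Measurable.of_discrete (f := G)).comp hidx
  have hinner : (fun z => condOn (ν.map (projOn d {k})) (cellOn d η {k} z) (midPtOn d η {k} z))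
      = fun z => G (nodeCellOf d η (e z)) :=
    funext fun z => by rw [cellOn_singleton, midPtOn_singleton]
  have hG : ∀ ck, (G ck).map e = nodeCond d η ν ck := fun ck => by
    rw [map_condOn e _ (measurableSet_nodeCell ck), MeasurableEquiv.apply_symm_apply,
      Measure.map_map e.measurable (measurable_projOn _)]
    rfl
  unfold kerBA
  rw [projOn_preimage_cellOn, extendPt_projOn, hinner,
    Measure.map_bind _ hmeasG e.measurable]
  simp_rw [hG]
  rw [Measure.bind_comp_eq_sum _ hidx, kerCell]
  refine Finset.sum_congr rfl fun ck _ => ?_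
  rw [Measure.map_apply (measurable_projOn _) (hidx (measurableSet_singleton ck))]
  rfl

variable (d pa η ν)

def cellStep (k : Fin K) (x : Pt d) : Measure (Pt d) :=
  (kerCell d pa η ν k (cellOf d η x)).map (Function.update x k)

def partialFactor (n : ℕ) (c : Cell d η) (k : Fin K) : Measure (Coord d k) :=
  if (k : ℕ) < n then nodeCond d η ν (c k) else Measure.dirac (basePt d k)

def partialProd (n : ℕ) (c : Cell d η) : Measure (Pt d) :=
  Measure.pi (partialFactor d η ν n c)

def partialWeight (n : ℕ) (c : Cell d η) : ℝ≥0∞ :=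
  ∏ k : Fin K, if (k : ℕ) < n then transWeight d pa η ν k c (c k)
    else if c k = baseCell d η k then 1 else 0

variable {d pa η ν}

lemma measurable_cellStep [IsProbabilityMeasure ν] (k : Fin K) :
    Measurable (cellStep d pa η ν k) :=
  (measurable_from_prod_countable_left (f := fun p : Pt d × Cell d η =>
      (kerCell d pa η ν k p.2).map (Function.update p.1 k))
    fun c => Measure.measurable_map_update k (kerCell d pa η ν k c)).comp
    (measurable_id.prodMk measurable_cellOf)

lemma chainM_kerBA_succ {n : ℕ} (hn : n < K) :
    chainM d pa (kerBA d pa η ν) (n + 1) =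
      (chainM d pa (kerBA d pa η ν) n).bind (cellStep d pa η ν ⟨n, hn⟩) := by
  rw [chainM, dif_pos hn]
  congr 1
  funext x
  rw [cellStep, ← map_kerBA_projOn,
    Measure.map_map (measurable_update x) (singletonEquiv d _).measurable]
  rfl

instance [IsProbabilityMeasure ν] (n : ℕ) (c : Cell d η) (k : Fin K) :
    IsProbabilityMeasure (partialFactor d η ν n c k) := by
  unfold partialFactor
  split_ifs <;> infer_instance

instance [IsProbabilityMeasure ν] (n : ℕ) (c : Cell d η) :
    IsProbabilityMeasure (partialProd d η ν n c) := by
  unfold partialProd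
  infer_instance

lemma partialProd_cell [IsProbabilityMeasure ν] {n : ℕ} {c : Cell d η}
    (hc : ∀ k : Fin K, n ≤ k → c k = baseCell d η k) :
    partialProd d η ν n c (cell d η c) = 1 := by
  rw [partialProd, cell_eq_pi, Measure.pi_pi]
  refine Finset.prod_eq_one fun k _ => ?_
  rw [partialFactor]
  split_ifs with hk
  · exact condOn_apply_self _ (nodeCellOf_nodeMid (c k))
  · rw [hc k (not_lt.mp hk)]
    exact Measure.dirac_apply_of_mem rfl

lemma ae_cellOf_partialProd [IsProbabilityMeasure ν] {n : ℕ} {c : Cell d η}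
    (hc : ∀ k : Fin K, n ≤ k → c k = baseCell d η k) :
    ∀ᵐ x ∂partialProd d η ν n c, cellOf d η x = c :=
  mem_ae_iff.mpr ((prob_compl_eq_zero_iff (measurableSet_cell c)).mpr (partialProd_cell hc))

lemma partialWeight_eq_zero {n : ℕ} {c : Cell d η} {k : Fin K} (hk : n ≤ k)
    (hck : c k ≠ baseCell d η k) : partialWeight d pa η ν n c = 0 :=
  Finset.prod_eq_zero (Finset.mem_univ k) (by rw [if_neg (not_lt.mpr hk), if_neg hck])

lemma partialFactor_succ_update {n : ℕ} {k : Fin K} (hk : (k : ℕ) = n) (c : Cell d η)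
    (ck : NodeCell d η k) :
    partialFactor d η ν (n + 1) (Function.update c k ck) =
      Function.update (partialFactor d η ν n c) k (nodeCond d η ν ck) := by
  funext j
  rcases eq_or_ne j k with rfl | hj
  · simp [partialFactor, hk]
  · have hjn : (j : ℕ) ≠ n := fun h => hj (Fin.ext (h.trans hk.symm))
    simp only [partialFactor, Function.update_of_ne hj, Nat.lt_succ_iff_lt_or_eq, hjn, or_false]

lemma bind_partialProd_map_update [IsProbabilityMeasure ν] {n : ℕ} {k : Fin K}
    (hk : (k : ℕ) = n) (c : Cell d η) (ck : NodeCell d η k) :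
    (partialProd d η ν n c).bind (fun x => (nodeCond d η ν ck).map (Function.update x k)) =
      partialProd d η ν (n + 1) (Function.update c k ck) := by
  rw [partialProd, partialProd, partialFactor_succ_update hk, Measure.pi_bind_map_update]

lemma bind_partialProd_cellStep [IsProbabilityMeasure ν] {n : ℕ} {k : Fin K}
    (hk : (k : ℕ) = n) {c : Cell d η} (hc : ∀ j : Fin K, n ≤ j → c j = baseCell d η j) :
    (partialProd d η ν n c).bind (cellStep d pa η ν k) =
      ∑ ck, transWeight d pa η ν k c ck • partialProd d η ν (n + 1) (Function.update c k ck) := by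
  have hstep : cellStep d pa η ν k =ᵐ[partialProd d η ν n c]
      fun x => (kerCell d pa η ν k c).map (Function.update x k) :=
    (ae_cellOf_partialProd hc).mono fun x hx => by rw [cellStep, hx]
  rw [Measure.bind_congr_right hstep]
  simp_rw [kerCell, Measure.map_finsetSum_smul _ _ (measurable_update _)]
  rw [Measure.bind_finsetSum_smul _ _ fun ck => Measure.measurable_map_update k _]
  simp_rw [bind_partialProd_map_update hk]

lemma partialWeight_succ_update (hsort : SortedGraph pa) {n : ℕ} {k : Fin K}
    (hk : (k : ℕ) = n) {c : Cell d η} (h0 : c k = baseCell d η k) (ck : NodeCell d η k) :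
    partialWeight d pa η ν (n + 1) (Function.update c k ck) =
      partialWeight d pa η ν n c * transWeight d pa η ν k c ck := by
  have hparents : ∀ j : Fin K, (j : ℕ) ≤ n → ∀ i ∈ pa j, Function.update c k ck i = c i :=
    fun j hj i hi => Function.update_of_ne (fun h => by
      have := hsort j i hi
      rw [h, Fin.lt_def] at this
      omega) _ _
  rw [partialWeight, partialWeight, Fintype.prod_eq_mul_prod_compl k,
    Fintype.prod_eq_mul_prod_compl k, if_pos (by omega), if_neg (by omega), h0,
    Function.update_self, transWeight_congr (hparents k hk.le), if_pos rfl, one_mul, mul_comm]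
  congr 1
  refine Finset.prod_congr rfl fun j hj => ?_
  have hjk : j ≠ k := by simpa using hj
  have hjn : (j : ℕ) ≠ n := fun h => hjk (Fin.ext (h.trans hk.symm))
  rw [Function.update_of_ne hjk]
  by_cases hlt : (j : ℕ) < n
  · rw [if_pos (by omega), if_pos hlt, transWeight_congr (hparents j hlt.le)]
  · rw [if_neg (by omega), if_neg hlt]

lemma smul_bind_partialProd_cellStep [IsProbabilityMeasure ν] (hsort : SortedGraph pa)
    {n : ℕ} {k : Fin K} (hk : (k : ℕ) = n) (c : Cell d η) :
    partialWeight d pa η ν n c • (partialProd d η ν n c).bind (cellStep d pa η ν k) =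
      ∑ ck, if c k = baseCell d η k then
        partialWeight d pa η ν (n + 1) (Function.update c k ck) •
          partialProd d η ν (n + 1) (Function.update c k ck) else 0 := by
  by_cases hc : ∀ j : Fin K, n ≤ j → c j = baseCell d η j
  · have h0 : c k = baseCell d η k := hc k hk.ge
    rw [bind_partialProd_cellStep hk hc, Finset.smul_sum]
    refine Finset.sum_congr rfl fun ck _ => ?_
    rw [if_pos h0, smul_smul, partialWeight_succ_update hsort hk h0]
  · push Not at hc
    obtain ⟨j, hj, hcj⟩ := hc
    rw [partialWeight_eq_zero hj hcj, zero_smul]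
    refine (Finset.sum_eq_zero fun ck _ => ?_).symm
    split_ifs with h0
    · have hjk : j ≠ k := fun h => hcj (h ▸ h0)
      have hjn : (j : ℕ) ≠ n := fun h => hjk (Fin.ext (h.trans hk.symm))
      rw [partialWeight_eq_zero (k := j) (by omega) (by rwa [Function.update_of_ne hjk]),
        zero_smul]
    · rfl

lemma chainM_zero_eq_sum (κ : ∀ k : Fin K, PtOn d (pa k) → Measure (PtOn d {k})) :
    chainM d pa κ 0 = ∑ c, partialWeight d pa η ν 0 c • partialProd d η ν 0 c := by
  rw [Fintype.sum_eq_single (baseCell d η) fun c hc => ?_]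
  · have hW : partialWeight d pa η ν 0 (baseCell d η) = 1 :=
      Finset.prod_eq_one fun k _ => by simp
    have hP : partialProd d η ν 0 (baseCell d η) = Measure.dirac (basePt d) := by
      have hfactor : partialFactor d η ν 0 (baseCell d η) = fun k => Measure.dirac (basePt d k) :=
        funext fun k => if_neg k.val.not_lt_zero
      rw [partialProd, hfactor, Measure.pi_dirac]
    rw [hW, hP, one_smul]
    rfl
  · obtain ⟨k, hk⟩ := Function.ne_iff.mp hc
    rw [partialWeight_eq_zero (Nat.zero_le _) hk, zero_smul]

/-- After `n` steps the chain has drawn the nodes `k < n` cell by cell; the others are still at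
`basePt d`. -/
theorem chainM_kerBA_eq_sum [IsProbabilityMeasure ν] (hsort : SortedGraph pa) :
    ∀ n ≤ K, chainM d pa (kerBA d pa η ν) n =
      ∑ c, partialWeight d pa η ν n c • partialProd d η ν n c
  | 0, _ => chainM_zero_eq_sum _
  | n + 1, hn => by
    rw [chainM_kerBA_succ hn, chainM_kerBA_eq_sum hsort n (by omega),
      Measure.finsetSum_smul_bind _ _ (measurable_cellStep _)]
    simp_rw [smul_bind_partialProd_cellStep hsort (k := ⟨n, hn⟩) rfl]
    exact Fintype.sum_sum_ite_update _ _
      fun c => partialWeight d pa η ν (n + 1) c • partialProd d η ν (n + 1) c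

lemma measure_cyl_inter_ne_zero {k : Fin K} {c : Cell d η} {ck : NodeCell d η k}
    (hpar : ν (cyl d η (pa k) c) ≠ 0) (hw : transWeight d pa η ν k c ck ≠ 0) :
    ν (cyl d η (pa k) c ∩ (fun x => x k) ⁻¹' nodeCell d η ck) ≠ 0 := by
  rw [transWeight, condOn_of_ne_zero _ hpar] at hw
  exact (inter_pos_of_cond_ne_zero (measurableSet_cyl _ _) hw).ne'

/-- Without colliders, `pa k ⊆ insert j (pa j)` for the last parent `j` of `k`, so the parent
cylinder of `k` contains the joint cell of `j` and its parents, which `ν(c_j | c_pa(j)) ≠ 0` makes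
non-null. -/
lemma measure_cyl_parents_ne_zero [IsProbabilityMeasure ν] (hsort : SortedGraph pa)
    (hnc : NoColliders pa) {c : Cell d η} (hw : ∀ k, transWeight d pa η ν k c (c k) ≠ 0)
    (k : Fin K) : ν (cyl d η (pa k) c) ≠ 0 := by
  induction k using WellFoundedLT.induction with
  | _ k ih =>
  rcases (pa k).eq_empty_or_nonempty with hempty | hne
  · rw [hempty, cyl_empty, measure_univ]
    exact one_ne_zero
  · set j := (pa k).max' hne
    have hj : j ∈ pa k := (pa k).max'_mem hne
    have hsub : cyl d η (pa j) c ∩ (fun x => x j) ⁻¹' nodeCell d η (c j) ⊆ cyl d η (pa k) c := by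
      rintro x ⟨hx, hxj⟩ i hi
      rcases ((pa k).le_max' i hi).eq_or_lt with hij | hlt
      · exact hij ▸ hxj
      · exact hx i (hnc k i hi j hj hlt)
    exact fun h0 =>
      measure_cyl_inter_ne_zero (ih j (hsort k j hj)) (hw j) (measure_mono_null hsub h0)

lemma nodeMarg_nodeCell_ne_zero [IsProbabilityMeasure ν] (hsort : SortedGraph pa)
    (hnc : NoColliders pa) {c : Cell d η} (hw : ∀ k, transWeight d pa η ν k c (c k) ≠ 0)
    (k : Fin K) : nodeMarg d ν k (nodeCell d η (c k)) ≠ 0 := by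
  rw [nodeMarg, Measure.map_apply (measurable_pi_apply k) (measurableSet_nodeCell _)]
  exact fun h0 => measure_cyl_inter_ne_zero (measure_cyl_parents_ne_zero hsort hnc hw k) (hw k)
    (measure_mono_null Set.inter_subset_right h0)

lemma transWeight_ne_zero_of_partialWeight_ne_zero {c : Cell d η}
    (hW : partialWeight d pa η ν K c ≠ 0) (k : Fin K) : transWeight d pa η ν k c (c k) ≠ 0 := by
  have hk := Finset.prod_ne_zero_iff.mp hW k (Finset.mem_univ k)
  rwa [if_pos k.isLt] at hk

lemma partialWeight_ne_top [IsProbabilityMeasure ν] (n : ℕ) (c : Cell d η) :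
    partialWeight d pa η ν n c ≠ ∞ := by
  refine ne_top_of_le_ne_top ENNReal.one_ne_top (Finset.prod_le_one' fun k _ => ?_)
  split_ifs
  · exact transWeight_le_one k c (c k)
  · exact le_rfl
  · exact zero_le_one

lemma opBA_eq_sum [IsProbabilityMeasure ν] (hsort : SortedGraph pa) :
    opBA d pa η ν = ∑ c, partialWeight d pa η ν K c • partialProd d η ν K c :=
  chainM_kerBA_eq_sum hsort K le_rfl

lemma map_midPt_partialProd [IsProbabilityMeasure ν] (c : Cell d η) :
    (partialProd d η ν K c).map (midPt d η) = Measure.dirac (cellMid d η c) := by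
  have hmid : midPt d η =ᵐ[partialProd d η ν K c] fun _ => cellMid d η c :=
    (ae_cellOf_partialProd fun k hk => absurd k.isLt (not_lt.mpr hk)).mono fun x hx => by
      rw [midPt_eq_cellMid_cellOf, hx]
  rw [Measure.map_congr hmid, Measure.map_const, measure_univ, one_smul]

lemma opM_eq_sum [IsProbabilityMeasure ν] (hsort : SortedGraph pa) :
    opM d pa η ν = ∑ c, partialWeight d pa η ν K c • Measure.dirac (cellMid d η c) := by
  rw [opM, opBA_eq_sum hsort, Measure.map_finsetSum_smul _ _ measurable_midPt]
  simp_rw [map_midPt_partialProd]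

lemma prodMarg_eq_pi : prodMarg d ν = Measure.pi (nodeMarg d ν) := rfl

lemma partialProd_eq_cond [IsProbabilityMeasure ν] {c : Cell d η}
    (hpos : ∀ k, nodeMarg d ν k (nodeCell d η (c k)) ≠ 0) :
    partialProd d η ν K c = (prodMarg d ν)[|cell d η c] := by
  have hfactor : partialFactor d η ν K c = fun k => (nodeMarg d ν k)[|nodeCell d η (c k)] :=
    funext fun k => by rw [partialFactor, if_pos k.isLt, nodeCond, condOn_of_ne_zero _ (hpos k)]
  rw [partialProd, hfactor, Measure.pi_cond _ fun k => measurableSet_nodeCell _, ← cell_eq_pi,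
    prodMarg_eq_pi]

lemma integral_partialProd [IsProbabilityMeasure ν] {c : Cell d η}
    (hpos : ∀ k, nodeMarg d ν k (nodeCell d η (c k)) ≠ 0) (f : Pt d → ℝ) :
    ∫ x, f x ∂partialProd d η ν K c = fAvg d η ν f (cellMid d η c) := by
  have hcell : prodMarg d ν (cell d η c) ≠ 0 := by
    rw [prodMarg_eq_pi, cell_eq_pi, Measure.pi_pi]
    exact Finset.prod_ne_zero_iff.mpr fun k _ => hpos k
  rw [partialProd_eq_cond hpos, integral_cond, fAvg, cylOf_univ, cellOf_cellMid, if_neg hcell]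

end CellDecomposition

end

open CellDecomposition in
/-- Lemma: integrals against `ν^{bA}` as integrals of cell averages
against `ν^M`. If `G` has no colliders, then for every `ν ∈ P(X)` and every 1-Lipschitz
`f : X → ℝ`, `∫ f dν^{bA} = ∫ f^ν dν^M`, where `f^ν` is the cell average of `f` w.r.t. the
product of the marginals of `ν` (set to `0` on null cells). -/
theorem stmt16 {K : ℕ} (d : Fin K → ℕ) (pa : Fin K → Finset (Fin K))
    (hsort : SortedGraph pa) (hnc : NoColliders pa) (η : ℕ)
    (ν : Measure (Pt d)) (hν : IsProbabilityMeasure ν) :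
    ∀ f : Pt d → ℝ, LipschitzWith 1 f →
      ∫ x, f x ∂(opBA d pa η ν) = ∫ x, fAvg d η ν f x ∂(opM d pa η ν) := by
  intro f hf
  have hint : ∀ (μ : Measure (Pt d)) [IsFiniteMeasure μ], Integrable f μ := fun _ _ =>
    hf.continuous.integrable_of_hasCompactSupport (HasCompactSupport.of_compactSpace f)
  rw [opBA_eq_sum hsort, opM_eq_sum hsort,
    integral_finsetSum_smul_measure (partialWeight_ne_top K) fun _ => hint _,
    integral_finsetSum_smul_measure (partialWeight_ne_top K) fun _ => integrable_dirac enorm_lt_top]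
  refine Finset.sum_congr rfl fun c _ => ?_
  rw [integral_dirac]
  rcases eq_or_ne (partialWeight d pa η ν K c) 0 with hW | hW
  · simp [hW]
  · rw [integral_partialProd fun k => nodeMarg_nodeCell_ne_zero hsort hnc
      (transWeight_ne_zero_of_partialWeight_ne_zero hW) k]
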